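/- arXiv:2307.01439 — 4 statements merged into one kernel-verified Lean document; each statement's English description precedes it below -/
import Mathlib

section
/- For all real numbers s, t, a, c with 0 < s < t < 1, 0 < a < 1, and c > 0, and for all real x_n, there exists a constant C (depending only on a and c, independent of s, t, x_n) such that exp(-x_n^2/(c s)) / (1 - t + s)^{1-a} ≤ C / (x_n^2 + 1 - t + s)^{1-a}. -/
/-!
With `u = 1 - t + s ≥ s`, factor `(x² + u)^(1-a) = u^(1-a) (1 + x²/u)^(1-a)`. Since the base is at
least `1` and the exponent at most `1`, the second factor is at most `1 + x²/u ≤ 1 + x²/s`, and the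
Gaussian factor absorbs this: `e^{-z} (1 + c z) ≤ 1 + c` for `z = x²/(c s) ≥ 0`.
-/

open Real

lemma exp_neg_mul_one_add_mul_le {c z : ℝ} (hc : 0 ≤ c) (hz : 0 ≤ z) :
    exp (-z) * (1 + c * z) ≤ 1 + c := by
  rw [exp_neg, inv_mul_le_iff₀ (exp_pos z)]
  calc 1 + c * z ≤ (1 + z) * (1 + c) := by nlinarith
    _ ≤ exp z * (1 + c) := by gcongr; linarith [add_one_le_exp z]

lemma exp_neg_div_mul_one_add_div_le {c s y : ℝ} (hc : 0 < c) (hs : 0 < s) (hy : 0 ≤ y) :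
    exp (-y / (c * s)) * (1 + y / s) ≤ 1 + c := by
  have hz : y / s = c * (y / (c * s)) := by field_simp
  rw [neg_div, hz]
  exact exp_neg_mul_one_add_mul_le hc.le (by positivity)

lemma rpow_add_le_rpow_mul_one_add_div {p s u y : ℝ} (hp : p ≤ 1) (hs : 0 < s) (hsu : s ≤ u)
    (hy : 0 ≤ y) : (y + u) ^ p ≤ u ^ p * (1 + y / s) := by
  have hu : 0 < u := hs.trans_le hsu
  have hfac : (y + u) ^ p = u ^ p * (1 + y / u) ^ p := by
    rw [← mul_rpow hu.le (by positivity)]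
    congr 1
    field_simp
    ring
  rw [hfac]
  gcongr
  calc (1 + y / u) ^ p ≤ 1 + y / u :=
        rpow_le_self_of_one_le (le_add_of_nonneg_right (by positivity)) hp
    _ ≤ 1 + y / s := by gcongr

lemma exp_neg_div_div_rpow_le {p c s u y : ℝ} (hp : p ≤ 1) (hc : 0 < c) (hs : 0 < s)
    (hsu : s ≤ u) (hy : 0 ≤ y) :
    exp (-y / (c * s)) / u ^ p ≤ (1 + c) / (y + u) ^ p := by
  have hu : 0 < u := hs.trans_le hsu
  rw [div_le_div_iff₀ (by positivity) (by positivity)]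
  calc exp (-y / (c * s)) * (y + u) ^ p
      ≤ exp (-y / (c * s)) * (u ^ p * (1 + y / s)) := by
        gcongr
        exact rpow_add_le_rpow_mul_one_add_div hp hs hsu hy
    _ = u ^ p * (exp (-y / (c * s)) * (1 + y / s)) := by ring
    _ ≤ u ^ p * (1 + c) := by gcongr; exact exp_neg_div_mul_one_add_div_le hc hs hy
    _ = (1 + c) * u ^ p := mul_comm _ _

theorem stmt0_general (a c : ℝ) (ha0 : 0 < a) (hc : 0 < c) :
    ∃ C : ℝ, 0 < C ∧ ∀ s t xn : ℝ, 0 < s → s < t → t < 1 →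
      Real.exp (-(xn ^ 2) / (c * s)) / (1 - t + s) ^ (1 - a) ≤
        C / (xn ^ 2 + 1 - t + s) ^ (1 - a) := by
  refine ⟨1 + c, by linarith, fun s t xn hs _ ht1 => ?_⟩
  rw [show xn ^ 2 + 1 - t + s = xn ^ 2 + (1 - t + s) by ring]
  exact exp_neg_div_div_rpow_le (by linarith) hc hs (by linarith) (sq_nonneg xn)

theorem stmt0 (a c : ℝ) (ha0 : 0 < a) (ha1 : a < 1) (hc : 0 < c) :
    ∃ C : ℝ, 0 < C ∧ ∀ s t xn : ℝ, 0 < s → s < t → t < 1 →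
      Real.exp (-(xn ^ 2) / (c * s)) / (1 - t + s) ^ (1 - a) ≤
        C / (xn ^ 2 + 1 - t + s) ^ (1 - a) :=
  stmt0_general a c ha0 hc
end

section
/- Let c > 0. Then there is a constant C = C(c) such that for all t > 0 and all x_n > 0, ∫_0^t s^{-1} exp(-x_n^2/(c s)) ds ≤ C exp(-x_n^2/(c t)) log(1 + c t / x_n^2). -/
/-!
Put `a = xₙ² / c`, so the integrand is `s⁻¹ e^{-a/s}` and `c t / xₙ² = t / a`. The function
`F s = e^{-a/s} log (1 + s/a)` vanishes at `0⁺`, and since `log (1 + x) ≥ x / (1 + x)` its derivative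
`e^{-a/s} (a/s² · log (1 + s/a) + 1/(a + s))` dominates `s⁻¹ e^{-a/s}`. Hence the integral over
`(0, t)` is at most `F t`, i.e. the estimate holds with `C = 1`.
-/

open Real MeasureTheory Set Filter Topology

lemma inv_mul_exp_neg_div_le {a s : ℝ} (ha : 0 < a) (hs : 0 < s) :
    s⁻¹ * exp (-a / s) ≤ a⁻¹ := by
  have hexp : exp (-a / s) ≤ (a / s)⁻¹ := by
    rw [neg_div, exp_neg]
    exact inv_anti₀ (by positivity) ((add_one_le_exp _).trans' (by linarith))
  calc s⁻¹ * exp (-a / s) ≤ s⁻¹ * (a / s)⁻¹ := by gcongr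
    _ = a⁻¹ := by field_simp

lemma integrableOn_inv_mul_exp_neg_div {a : ℝ} (ha : 0 < a) (t : ℝ) :
    IntegrableOn (fun s => s⁻¹ * exp (-a / s)) (Icc 0 t) := by
  have hmeas : Measurable fun s : ℝ => s⁻¹ * exp (-a / s) := by fun_prop
  refine Measure.integrableOn_of_bounded (M := a⁻¹) measure_Icc_lt_top.ne
    hmeas.aestronglyMeasurable ?_
  filter_upwards [ae_restrict_mem measurableSet_Icc] with s hs
  rw [norm_of_nonneg (by have := hs.1; positivity)]
  rcases hs.1.eq_or_lt with rfl | hs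
  · simpa using ha.le -- `0⁻¹ = 0` in Lean
  · exact inv_mul_exp_neg_div_le ha hs

lemma hasDerivAt_exp_neg_div_mul_log {a s : ℝ} (ha : 0 < a) (hs : 0 < s) :
    HasDerivAt (fun s => exp (-a / s) * log (1 + s / a))
      (exp (-a / s) * (a / s ^ 2 * log (1 + s / a) + (a + s)⁻¹)) s := by
  have hexp : HasDerivAt (fun s => exp (-a / s)) (exp (-a / s) * (a / s ^ 2)) s := by
    convert ((hasDerivAt_inv hs.ne').const_mul (-a)).exp using 1
    · ext x; rw [div_eq_mul_inv]
    · field_simp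
  have hlog : HasDerivAt (fun s => log (1 + s / a)) (a + s)⁻¹ s := by
    convert (((hasDerivAt_id' s).div_const a).const_add 1).log (by positivity) using 1
    field_simp
  exact (hexp.mul hlog).congr_deriv (by ring)

lemma inv_le_div_sq_mul_log_add_inv {a s : ℝ} (ha : 0 < a) (hs : 0 < s) :
    s⁻¹ ≤ a / s ^ 2 * log (1 + s / a) + (a + s)⁻¹ := by
  have hlog : s / (a + s) ≤ log (1 + s / a) := by
    have := one_sub_inv_le_log_of_pos (x := 1 + s / a) (by positivity)
    convert this using 1
    field_simp
    ring
  calc s⁻¹ = a / s ^ 2 * (s / (a + s)) + (a + s)⁻¹ := by field_simp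
    _ ≤ a / s ^ 2 * log (1 + s / a) + (a + s)⁻¹ := by gcongr

lemma continuousWithinAt_exp_neg_div_mul_log_zero {a : ℝ} (ha : 0 < a) :
    ContinuousWithinAt (fun s => exp (-a / s) * log (1 + s / a)) (Ici 0) 0 := by
  have hlog : Tendsto (fun s => log (1 + s / a)) (𝓝[Ici 0] 0) (𝓝 0) := by
    have : ContinuousAt (fun s => log (1 + s / a)) 0 := by fun_prop (disch := simp)
    simpa using this.tendsto.mono_left nhdsWithin_le_nhds
  have hbdd : ∀ s ∈ Ici (0:ℝ), ‖exp (-a / s)‖ ≤ 1 := fun s hs => by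
    rw [norm_of_nonneg (exp_nonneg _), exp_le_one_iff, neg_div, neg_nonpos]
    exact div_nonneg ha.le hs
  have := isBoundedUnder_le_mul_tendsto_zero
    ⟨1, eventually_map.2 (eventually_nhdsWithin_of_forall hbdd)⟩ hlog
  simpa [ContinuousWithinAt] using this

theorem integral_inv_mul_exp_neg_div_le {a t : ℝ} (ha : 0 < a) (ht : 0 ≤ t) :
    ∫ s in (0:ℝ)..t, s⁻¹ * exp (-a / s) ≤ exp (-a / t) * log (1 + t / a) := by
  have hcont : ContinuousOn (fun s => exp (-a / s) * log (1 + s / a)) (Icc 0 t) := by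
    intro s hs
    rcases hs.1.eq_or_lt with rfl | hs
    · exact (continuousWithinAt_exp_neg_div_mul_log_zero ha).mono Icc_subset_Ici_self
    · exact (hasDerivAt_exp_neg_div_mul_log ha hs).continuousAt.continuousWithinAt
  have hFTC := intervalIntegral.integral_le_sub_of_hasDeriv_right_of_le ht hcont
    (fun s hs => (hasDerivAt_exp_neg_div_mul_log ha hs.1).hasDerivWithinAt)
    (integrableOn_inv_mul_exp_neg_div ha t)
    (fun s hs => by
      rw [mul_comm]
      exact mul_le_mul_of_nonneg_left (inv_le_div_sq_mul_log_add_inv ha hs.1) (exp_pos _).le)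
  simpa using hFTC

theorem stmt3 (c : ℝ) (hc : 0 < c) :
    ∃ C : ℝ, 0 < C ∧ ∀ t xn : ℝ, 0 < t → 0 < xn →
      ∫ s in (0:ℝ)..t, s⁻¹ * Real.exp (-(xn ^ 2) / (c * s)) ≤
        C * Real.exp (-(xn ^ 2) / (c * t)) * Real.log (1 + c * t / xn ^ 2) := by
  refine ⟨1, one_pos, fun t xn ht hxn => ?_⟩
  have hdiv : ∀ s, -(xn ^ 2) / (c * s) = -(xn ^ 2 / c) / s := fun s => by
    rw [neg_div, neg_div, div_div]
  have hratio : c * t / xn ^ 2 = t / (xn ^ 2 / c) := by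
    field_simp
  simp only [hdiv, hratio, one_mul]
  exact integral_inv_mul_exp_neg_div_le (by positivity) ht.le
end

section
/- Let c > 0 and 0 < k < 1. Then there is a constant C = C(c,k) such that for all t > 0 and all x_n ≥ 0, ∫_0^t s^{-k} exp(-x_n^2/(c s)) ds ≤ C t^{1-k} exp(-x_n^2/(2 c t)). -/
/-! For `0 < s ≤ t` the Gaussian factor satisfies `exp (-x²/(c s)) ≤ exp (-x²/(c t))`, so it can be
pulled out of the integral at its value at `s = t`; what is left is `∫₀ᵗ s^(-k) ds = t^(1-k)/(1-k)`,
finite because `k < 1`. -/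

open Real MeasureTheory

lemma exp_neg_div_le_exp_neg_div {a u v : ℝ} (ha : 0 ≤ a) (hu : 0 < u) (huv : u ≤ v) :
    exp (-a / u) ≤ exp (-a / v) := by
  rw [exp_le_exp, neg_div, neg_div, neg_le_neg_iff]
  exact div_le_div_of_nonneg_left ha hu huv

lemma integral_rpow_neg_of_lt_one {k : ℝ} (hk : k < 1) (t : ℝ) :
    ∫ s in (0 : ℝ)..t, s ^ (-k) = (1 - k)⁻¹ * t ^ (1 - k) := by
  rw [integral_rpow (Or.inl (by linarith)), zero_rpow (by linarith)]
  ring_nf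

lemma integral_rpow_neg_mul_exp_neg_div_le {c k t a : ℝ} (hc : 0 < c) (hk : k < 1) (ht : 0 < t)
    (ha : 0 ≤ a) :
    ∫ s in (0 : ℝ)..t, s ^ (-k) * exp (-a / (c * s)) ≤
      (1 - k)⁻¹ * t ^ (1 - k) * exp (-a / (c * t)) := by
  have hint : IntervalIntegrable (fun s : ℝ => s ^ (-k)) volume 0 t :=
    intervalIntegral.intervalIntegrable_rpow' (by linarith)
  calc ∫ s in (0 : ℝ)..t, s ^ (-k) * exp (-a / (c * s))
      ≤ ∫ s in (0 : ℝ)..t, s ^ (-k) * exp (-a / (c * t)) := by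
        simp only [intervalIntegral.integral_of_le ht.le]
        refine setIntegral_mono_of_nonneg (fun s hs => by have := hs.1; positivity)
          (fun s hs => ?_) (hint.mul_const _).1
        have hs0 : 0 < s := hs.1
        exact mul_le_mul_of_nonneg_left
          (exp_neg_div_le_exp_neg_div ha (by positivity) (by gcongr; exact hs.2)) (by positivity)
    _ = (1 - k)⁻¹ * t ^ (1 - k) * exp (-a / (c * t)) := by
        rw [intervalIntegral.integral_mul_const, integral_rpow_neg_of_lt_one hk]

theorem stmt4_general (c k : ℝ) (hc : 0 < c) (hk1 : k < 1) :
    ∃ C : ℝ, 0 < C ∧ ∀ t xn : ℝ, 0 < t → 0 ≤ xn →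
      ∫ s in (0:ℝ)..t, s ^ (-k) * Real.exp (-(xn ^ 2) / (c * s)) ≤
        C * t ^ (1 - k) * Real.exp (-(xn ^ 2) / (2 * c * t)) := by
  refine ⟨(1 - k)⁻¹, inv_pos.2 (sub_pos.2 hk1), fun t xn ht _ => ?_⟩
  calc ∫ s in (0:ℝ)..t, s ^ (-k) * exp (-(xn ^ 2) / (c * s))
      ≤ (1 - k)⁻¹ * t ^ (1 - k) * exp (-(xn ^ 2) / (c * t)) :=
        integral_rpow_neg_mul_exp_neg_div_le hc hk1 ht (sq_nonneg xn)
    _ ≤ (1 - k)⁻¹ * t ^ (1 - k) * exp (-(xn ^ 2) / (2 * c * t)) := by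
        have : 0 < 1 - k := sub_pos.2 hk1
        exact mul_le_mul_of_nonneg_left
          (exp_neg_div_le_exp_neg_div (sq_nonneg xn) (by positivity) (by nlinarith)) (by positivity)

theorem stmt4 (c k : ℝ) (hc : 0 < c) (hk0 : 0 < k) (hk1 : k < 1) :
    ∃ C : ℝ, 0 < C ∧ ∀ t xn : ℝ, 0 < t → 0 ≤ xn →
      ∫ s in (0:ℝ)..t, s ^ (-k) * Real.exp (-(xn ^ 2) / (c * s)) ≤
        C * t ^ (1 - k) * Real.exp (-(xn ^ 2) / (2 * c * t)) :=
  stmt4_general c k hc hk1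
end

section
/- Let n ≥ 3 be an integer and set H(x, y) = (x^2 + y^2)^{-(n-2)/2} for (x,y) ≠ (0,0). Then for all reals 0 ≤ t < u and 0 ≤ a < b, H(t, a) - H(t, b) - H(u, a) + H(u, b) ≥ (n(n-2)/4) (u^2 - t^2)(b^2 - a^2) H(u, b)^{(n+2)/(n-2)}. -/
/-!
Write `f s = s ^ (-p)` with `p = (n - 2) / 2`, so that `H x y = f (x ^ 2 + y ^ 2)`. The left-hand side
is then a mixed second difference of `(X, Y) ↦ f (X + Y)` over the rectangle
`[t², u²] × [a², b²]`, and two applications of the mean value theorem turn it into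
`(u² - t²) (b² - a²) f'' ξ` with `ξ ≤ u² + b²`. Since `f'' ξ = p (p + 1) ξ ^ (-p - 2)` is decreasing,
it is at least `p (p + 1) (u² + b²) ^ (-p - 2)`, which is the right-hand side.
-/

open Real Set

theorem exists_sub_eq_mul_of_hasDerivAt {f f' : ℝ → ℝ} {a b : ℝ} (hab : a < b)
    (hf : ∀ x ∈ Icc a b, HasDerivAt f (f' x) x) :
    ∃ c ∈ Ioo a b, f b - f a = (b - a) * f' c := by
  obtain ⟨c, hc, hslope⟩ := exists_hasDerivAt_eq_slope f f' hab
    (fun x hx => (hf x hx).continuousAt.continuousWithinAt)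
    (fun x hx => hf x (Ioo_subset_Icc_self hx))
  exact ⟨c, hc, by rw [hslope, mul_div_cancel₀ _ (sub_ne_zero.mpr hab.ne')]⟩

theorem exists_mixed_sub_eq_mul_deriv2 {f f' f'' : ℝ → ℝ} {x₀ x₁ y₀ y₁ : ℝ}
    (hx : x₀ < x₁) (hy : y₀ < y₁)
    (hf : ∀ s ∈ Icc (x₀ + y₀) (x₁ + y₁), HasDerivAt f (f' s) s)
    (hf' : ∀ s ∈ Icc (x₀ + y₀) (x₁ + y₁), HasDerivAt f' (f'' s) s) :
    ∃ ξ ∈ Ioo (x₀ + y₀) (x₁ + y₁),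
      f (x₀ + y₀) - f (x₀ + y₁) - f (x₁ + y₀) + f (x₁ + y₁) = (x₁ - x₀) * (y₁ - y₀) * f'' ξ := by
  have mem {x y : ℝ} (hx' : x ∈ Icc x₀ x₁) (hy' : y ∈ Icc y₀ y₁) :
      x + y ∈ Icc (x₀ + y₀) (x₁ + y₁) :=
    ⟨add_le_add hx'.1 hy'.1, add_le_add hx'.2 hy'.2⟩
  obtain ⟨c, hc, hc_eq⟩ := exists_sub_eq_mul_of_hasDerivAt
    (f := fun x => f (x + y₁) - f (x + y₀)) (f' := fun x => f' (x + y₁) - f' (x + y₀)) hx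
    fun x hx' => ((hf _ (mem hx' (right_mem_Icc.mpr hy.le))).comp_add_const x y₁).sub
      ((hf _ (mem hx' (left_mem_Icc.mpr hy.le))).comp_add_const x y₀)
  have hc' : c ∈ Icc x₀ x₁ := Ioo_subset_Icc_self hc
  obtain ⟨d, hd, hd_eq⟩ := exists_sub_eq_mul_of_hasDerivAt
    (f := fun y => f' (c + y)) (f' := fun y => f'' (c + y)) hy
    fun y hy' => (hf' _ (mem hc' hy')).comp_const_add c y
  refine ⟨c + d, ⟨add_lt_add_of_lt_of_lt hc.1 hd.1, add_lt_add_of_lt_of_lt hc.2 hd.2⟩, ?_⟩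
  linear_combination hc_eq + (x₁ - x₀) * hd_eq

theorem mul_mul_le_mixed_sub {f f' f'' : ℝ → ℝ} {x₀ x₁ y₀ y₁ m : ℝ}
    (hx : x₀ < x₁) (hy : y₀ < y₁)
    (hf : ∀ s ∈ Icc (x₀ + y₀) (x₁ + y₁), HasDerivAt f (f' s) s)
    (hf' : ∀ s ∈ Icc (x₀ + y₀) (x₁ + y₁), HasDerivAt f' (f'' s) s)
    (hm : ∀ s ∈ Ioo (x₀ + y₀) (x₁ + y₁), m ≤ f'' s) :
    (x₁ - x₀) * (y₁ - y₀) * m ≤ f (x₀ + y₀) - f (x₀ + y₁) - f (x₁ + y₀) + f (x₁ + y₁) := by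
  obtain ⟨ξ, hξ, hξ_eq⟩ := exists_mixed_sub_eq_mul_deriv2 hx hy hf hf'
  rw [hξ_eq]
  exact mul_le_mul_of_nonneg_left (hm ξ hξ) (mul_nonneg (sub_pos.mpr hx).le (sub_pos.mpr hy).le)

theorem mul_mul_rpow_le_mixed_sub_rpow_neg {p x₀ x₁ y₀ y₁ : ℝ} (hp : 0 ≤ p)
    (hx : x₀ < x₁) (hy : y₀ < y₁) (h₀ : 0 < x₀ + y₀) :
    (x₁ - x₀) * (y₁ - y₀) * (p * (p + 1) * (x₁ + y₁) ^ (-p - 2)) ≤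
      (x₀ + y₀) ^ (-p) - (x₀ + y₁) ^ (-p) - (x₁ + y₀) ^ (-p) + (x₁ + y₁) ^ (-p) := by
  have ne_zero {s : ℝ} (hs : s ∈ Icc (x₀ + y₀) (x₁ + y₁)) : s ≠ 0 := (h₀.trans_le hs.1).ne'
  refine mul_mul_le_mixed_sub (f' := fun s => -p * s ^ (-p - 1))
    (f'' := fun s => p * (p + 1) * s ^ (-p - 2)) hx hy
    (fun s hs => hasDerivAt_rpow_const (Or.inl (ne_zero hs)))
    (fun s hs => ((hasDerivAt_rpow_const (Or.inl (ne_zero hs))).const_mul (-p)).congr_deriv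
      (by ring_nf))
    fun s hs => mul_le_mul_of_nonneg_left
      (rpow_le_rpow_of_nonpos (h₀.trans hs.1) hs.2.le (by linarith)) (by positivity)

theorem stmt15 (n : ℕ) (hn : 3 ≤ n)
    (H : ℝ → ℝ → ℝ) (hH : ∀ x y, H x y = (x ^ 2 + y ^ 2) ^ (-(((n : ℝ) - 2) / 2)))
    (t u a b : ℝ) (ht : 0 ≤ t) (htu : t < u) (ha : 0 ≤ a) (hab : a < b)
    (hta : (t, a) ≠ (0, 0)) :
    H t a - H t b - H u a + H u b ≥
      ((n : ℝ) * ((n : ℝ) - 2) / 4) * (u ^ 2 - t ^ 2) * (b ^ 2 - a ^ 2) *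
        (H u b) ^ (((n : ℝ) + 2) / ((n : ℝ) - 2)) := by
  have hn' : (3 : ℝ) ≤ n := by exact_mod_cast hn
  set p : ℝ := ((n : ℝ) - 2) / 2
  have hta' : 0 < t ^ 2 + a ^ 2 := by
    rcases eq_or_ne t 0 with rfl | ht0
    · have ha0 : a ≠ 0 := fun ha0 => hta (by rw [ha0])
      positivity
    · positivity
  have hcoef : (n : ℝ) * ((n : ℝ) - 2) / 4 = p * (p + 1) := by ring
  have hpow : H u b ^ (((n : ℝ) + 2) / ((n : ℝ) - 2)) = (u ^ 2 + b ^ 2) ^ (-p - 2) := by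
    rw [hH, ← rpow_mul (by positivity)]
    congr 1
    have : (n : ℝ) - 2 ≠ 0 := by linarith
    simp only [p]
    field_simp
    ring
  rw [ge_iff_le, hpow, hcoef, hH, hH, hH, hH, mul_assoc (p * (p + 1)), mul_comm (p * (p + 1)),
    mul_assoc]
  exact mul_mul_rpow_le_mixed_sub_rpow_neg (by simp only [p]; linarith)
    (pow_lt_pow_left₀ htu ht two_ne_zero) (pow_lt_pow_left₀ hab ha two_ne_zero) hta'
end
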